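/- arXiv:1407.1249 — 2 statements merged into one kernel-verified Lean document; each statement's English description precedes it below -/
import Mathlib

section
/- With M, N, h as in the context, the kernel of the linear map given by N equals the internal direct sum of the range of the linear map given by M and the line spanned by h; equivalently ker(N) = range(M) ⊔ ℚ·h with range(M) ∩ ℚ·h = 0. (This shows the cohomology H⁵ = ker d₀ / im d₀ of the weight-10 complex of ham⁰₂ is one-dimensional, spanned by the class of h.) -/
open Matrix

def Mt : Matrix (Fin 9) (Fin 12) ℚ :=
  !![-135/4, 0, -60, 15/2, -45, -15, 5/4, -45/4, 75/2, 0, 0, 0; 108/11, 18/11, 0, 0, 0, 60/11, 46/11, -90/11, 156/11, 0, 0, 0; 27/4, 0, 12, -9/2, -9, 0, 0, 0, 0, 27/4, 18, 0; 0, 0, -10, 2/3, -2, 2, 1, 0, 6, 4, -1, 0; 0, 5/2, 29, 47/3, -23, 43, 13/2, 9/2, 25, 16, -71/2, 0; 0, 5, 45, 155/6, -40, 65, 10, 0, 50, 20, -115/2, 0; 0, 3/2, 18, 23/2, -3, 30, 11/2, 9/2, 9, 6, -33, 0; 0, 0, 0, 0, 0, 6, 7, 0, -6, 0, 0, 0;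 0, 0, -6, -3, 0, 0, 0, 0, 0, 3, -6, 70]

def M : Matrix (Fin 12) (Fin 9) ℚ := Mt.transpose

def N : Matrix (Fin 4) (Fin 12) ℚ :=
  !![0, 140, 0, 0, 0, -15, 15, 30, 5/2, 0, 0, 0; -5, -4, 1/4, -11/2, 31/12, 31/6, -3, -2, 5/3, -1, 2, 0; -16, 32, -2, -12, 22/3, 58/3, -18, -12, -5/3, 0, 8, 0; 0, 0, 0, 42, 7, 0, 0, 0, 0, 0, 14, 3]

def h : Fin 12 → ℚ := ![0, 0, 0, 0, 0, 0, 0, 3, -36, -72, -3, 14]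

/-!
Both claims reduce to finitely many identities between explicit rational matrices, which the
kernel checks by evaluation. A splitting `M P + h qᵀ + C N = 1`, together with `N M = 0` and
`N h = 0`, writes every `x ∈ ker N` as `M (P x) + (q ⬝ x) h`; a functional `r` with `rᵀ M = 0`
and `r ⬝ h = 1` separates `h` from `range M`.
-/

namespace Matrix

variable {R m n p : Type*} [CommRing R] [Fintype m] [Fintype n]

theorem ker_mulVecLin_eq_range_sup_span [Fintype p] [DecidableEq m]
    {A : Matrix m n R} {B : Matrix p m R} {v : m → R} (P : Matrix n m R) (q : m → R)
    (C : Matrix m p R) (hBA : B * A = 0) (hBv : B *ᵥ v = 0)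
    (hsplit : A * P + vecMulVec v q + C * B = 1) :
    LinearMap.ker B.mulVecLin = LinearMap.range A.mulVecLin ⊔ Submodule.span R {v} := by
  refine le_antisymm (fun x hx => ?_) (sup_le ?_ ?_)
  · have hx : B *ᵥ x = 0 := hx
    have hdecomp : A *ᵥ (P *ᵥ x) + (q ⬝ᵥ x) • v = x := by
      simpa only [add_mulVec, ← mulVec_mulVec, vecMulVec_mulVec, op_smul_eq_smul, hx, mulVec_zero,
        add_zero, one_mulVec] using congrArg (· *ᵥ x) hsplit
    rw [← hdecomp]
    exact Submodule.add_mem_sup ⟨P *ᵥ x, rfl⟩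
      (Submodule.smul_mem _ _ (Submodule.mem_span_singleton_self v))
  · rintro _ ⟨y, rfl⟩
    simp [mulVec_mulVec, hBA]
  · simpa [Submodule.span_singleton_le_iff_mem] using hBv

theorem range_mulVecLin_inf_span_eq_bot [NoZeroDivisors R] {A : Matrix m n R} {v : m → R}
    (r : m → R) (hrA : r ᵥ* A = 0) (hrv : r ⬝ᵥ v ≠ 0) :
    LinearMap.range A.mulVecLin ⊓ Submodule.span R {v} = ⊥ := by
  rw [eq_bot_iff]
  rintro _ ⟨⟨y, rfl⟩, hv⟩
  obtain ⟨c, hc⟩ := Submodule.mem_span_singleton.mp hv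
  have hc0 : c * (r ⬝ᵥ v) = 0 := by
    rw [← smul_eq_mul, ← dotProduct_smul, hc]
    simp [dotProduct_mulVec, hrA]
  rw [Submodule.mem_bot, ← hc, (mul_eq_zero.mp hc0).resolve_right hrv, zero_smul]

end Matrix

-- Found by exact linear algebra over `ℚ`.
def splitP : Matrix (Fin 9) (Fin 12) ℚ :=
  !![0, 0, 0, 0, -91/3645, -293/10206, 463/5670, -137/8505, -2279/102060, 92/8505, -422/25515, -16/8505; 0, 0, 0, 0, -431/40824, -13043/571536, 17501/63504, -9979/95256, -71341/1143072, 643/23814, -2201/142884, -59/23814; 0, 0, 0, 0, -601/56133, 39407/785862, -823/7938, -293/130977, 15709/1571724, -832/130977, 20662/392931, 626/130977; 0, 0, 0, 0, 4127/24948, 5651/349272, -667/3528, 34003/58212, 270001/698544, -2491/14553, 12827/87318, 290/14553; 0, 0, 0, 0, -3109/37422, -60715/523908, 3707/5292, -2339/87318, -185921/1047816, 3874/43659, -9799/130977, -446/43659; 0, 0, 0, 0, 8419/187110, 45497/523908, -12221/26460, 421/87318, 553103/5239080, -11614/218295, 27799/654885, 1292/218295; 0, 0, 0, 0, 0, 0,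 0, 0, 0, 0, 0, 0; 0, 0, 0, 0, 0, 0, 0, 0, 0, 0, 0, 0; 0, 0, 0, 0, -1/2268, -25/31752, -5/3528, -29/5292, -155/63504, 5/1323, -13/7938, 37/2646]

def splitQ : Fin 12 → ℚ := ![0, 0, 0, 0, 5/2268, 125/31752, 25/3528, 145/5292, 775/63504, -25/1323, 65/7938, 2/1323]

def splitC : Matrix (Fin 12) (Fin 4) ℚ :=
  !![0, -1/7, -1/56, -1/42; 1/140, 0, 0, 0; 4/35, 8/7, -5/14, 1/21; 0, 0, 0, 1/42; 0, 0, 0, 0; 0, 0, 0, 0; 0, 0, 0, 0; 0, 0, 0, 0; 0, 0, 0, 0; 0, 0, 0, 0; 0, 0, 0, 0; 0, 0, 0, 0]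

def dualH : Fin 12 → ℚ := ![4/189, 109/63, -1/72, 1/36, -25/1512, -1/6, 1/7, 1/3, 0, 0, 0, 0]

theorem N_mul_M : N * M = 0 := by decide +kernel

theorem N_mulVec_h : N *ᵥ h = 0 := by decide +kernel

theorem M_mul_splitP_add : M * splitP + vecMulVec h splitQ + splitC * N = 1 := by decide +kernel

theorem dualH_vecMul_M : dualH ᵥ* M = 0 := by decide +kernel

theorem dualH_dotProduct_h : dualH ⬝ᵥ h = 1 := by decide +kernel

theorem stmt6 :
    LinearMap.ker N.mulVecLin = LinearMap.range M.mulVecLin ⊔ Submodule.span ℚ {h} ∧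
    LinearMap.range M.mulVecLin ⊓ Submodule.span ℚ {h} = ⊥ :=
  ⟨ker_mulVecLin_eq_range_sup_span splitP splitQ splitC N_mul_M N_mulVec_h M_mul_splitP_add,
    range_mulVecLin_inf_span_eq_bot dualH dualH_vecMul_M (dualH_dotProduct_h ▸ one_ne_zero)⟩
end

section
/- The quotient vector space ker(N̄.mulVecLin) / (range(M̄.mulVecLin) viewed as a subspace of the kernel) is one-dimensional over ℚ, where M̄ and N̄ are the explicit matrices of the context satisfying N̄·M̄ = 0. (This is the computation dim H⁷(ham₂)₈ = 1, recovering the one-dimensionality of the Gel'fand–Kalinin–Fuks cohomology group.) -/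
/-! The space is ker N̄ / im M̄ inside ℚ¹⁴, so its dimension is 14 - rank N̄ - rank M̄ = 14 - 4 - 9.
Both ranks are certified by exact rational matrices: N̄ has a right inverse, and M̄ factors
through ℚ⁹ as a left-invertible matrix times a right-invertible one. -/

open Matrix

def Mbt : Matrix (Fin 18) (Fin 14) ℚ :=
  !![135/4, 0, -20, -60, 15, 5/4, -135/4, -15, -15, 0, 0, 0, 0, 0; -18, -12, 0, 0, 0, 23/3, -45, 21, 10, 0, 0, 0, 0, 0; -27/4, 0, -20, 12, 3, 0, 0, 0, 0, 63/8, -18, 0, 0, 0; 0, 0, 2, -10, 2/3, 1, 2, -1/3, 2, -7, 1, 0, 0, 0; 0, -11/2, -17, 9, 71/12, 7/8, 51/8, 233/12, 10, -49/4, 4, 0, 0, 0; 0, -1/3, -9, 5, 49/18, 5/12, 55/4, 47/9, 19/3, -28/3, -1/6, 0, 0, 0; 0, -5/2, -20, 0, 65/12, -15/8, -75/8, 65/12, -5, 35/4, -25/2, 0, 0, 0; 0, 0, 0, 0, 0, 7, -18, -9, 6, 0, 0, 0, 0, 0; 0, 0, -2, -6, 0, 0, 0, 0, 0, -21/2, 6,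 70, 0, 0; -1/2, 2, -2, 14/3, 1/3, 0, 0, 0, 0, 0, 0, 0, -28, -14/3; -5/2, 2, 0, 16/3, -1/3, 0, 0, 0, 0, 0, 0, 0, -28, -28/3; 0, 8, 0, 0, 0, -3, 0, 1, -6, 0, 0, 0, -112, 0; 0, 0, 0, 0, 0, -1, 15, -6, 0, -3/2, -3, 0, 48, -14; 0, 0, 0, 0, 0, -2/3, -1, -1, -2, 5/2, -1, 0, 4, -14/3; 0, 0, 0, 0, 4/3, 11/3, -45, 46/3, 0, 5/2, 11, 0, -136, 14; 0, 0, 2, 0, -1, -3/2, 123/8, -4, 0, -21/16, -33/16, 0, 42, -21/8; 0, 0, 0, 2, -1/3, -1/2, 39/8, -4/3, 0, 7/16, -13/16, 0, 14, -35/24; 0, 0, 0, 0, 0, 0, 0, 0, 0, 1, -1, -20/3, 0, 2]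

def Mb : Matrix (Fin 14) (Fin 18) ℚ := Mbt.transpose

def Nb : Matrix (Fin 4) (Fin 14) ℚ :=
  !![0, -35, 0, 0, 0, -30, 0, -15, 25/2, 0, 0, 0, -5/2, 0; 11, -9, -39/8, -31/8, -61/2, -75, -10, -10, 85/2, -2/3, -20/3, 0, -1, -3; -16, 8, 9, 5, 52, 20, 8/3, -2, -55/3, 0, 8, 0, 1, 4; 0, 0, 63/2, 21/2, 84, 0, 0, 0, 0, 0, -14, 3, 0, 3]

def Hb : Type :=
  LinearMap.ker Nb.mulVecLin ⧸
    (Submodule.comap (LinearMap.ker Nb.mulVecLin).subtype (LinearMap.range Mb.mulVecLin))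

noncomputable instance : AddCommGroup Hb := by unfold Hb; infer_instance
noncomputable instance : Module ℚ Hb := by unfold Hb; infer_instance

namespace Matrix

variable {K m n p : Type*} [Field K] [Fintype n]

theorem rank_eq_of_eq_mul_of_mul_eq_one [Fintype m] [DecidableEq m] {r : ℕ} {M : Matrix m n K}
    (P : Matrix m (Fin r) K) (Q : Matrix (Fin r) n K) (L : Matrix (Fin r) m K)
    (R : Matrix n (Fin r) K) (hPQ : M = P * Q) (hLP : L * P = 1) (hQR : Q * R = 1) :
    M.rank = r := by
  refine le_antisymm ?_ ?_
  · calc M.rank ≤ P.rank := hPQ ▸ rank_mul_le_left P Q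
      _ ≤ r := P.rank_le_card_width.trans_eq (Fintype.card_fin r)
  · have hLMR : L * M * R = 1 := by
      rw [hPQ, ← Matrix.mul_assoc, hLP, Matrix.one_mul, hQR]
    calc r = (L * M * R).rank := by rw [hLMR, rank_one, Fintype.card_fin]
      _ ≤ (L * M).rank := rank_mul_le_left _ _
      _ ≤ M.rank := rank_mul_le_right _ _

theorem finrank_homology_eq [Fintype m] [Fintype p] (A : Matrix m n K) (B : Matrix n p K)
    (hAB : A * B = 0) :
    Module.finrank K (LinearMap.ker A.mulVecLin ⧸
        (LinearMap.range B.mulVecLin).comap (LinearMap.ker A.mulVecLin).subtype) =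
      Fintype.card n - A.rank - B.rank := by
  have hle : LinearMap.range B.mulVecLin ≤ LinearMap.ker A.mulVecLin := by
    rintro _ ⟨v, rfl⟩
    rw [LinearMap.mem_ker, ← LinearMap.comp_apply, ← mulVecLin_mul, hAB, mulVecLin_zero,
      LinearMap.zero_apply]
  have hboundaries : Module.finrank K
      ((LinearMap.range B.mulVecLin).comap (LinearMap.ker A.mulVecLin).subtype) = B.rank :=
    (Submodule.comapSubtypeEquivOfLe hle).finrank_eq
  have hcycles : A.rank + Module.finrank K (LinearMap.ker A.mulVecLin) = Fintype.card n := by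
    rw [rank, LinearMap.finrank_range_add_finrank_ker, Module.finrank_fintype_fun_eq_card]
  have hquotient := Submodule.finrank_quotient_add_finrank
    ((LinearMap.range B.mulVecLin).comap (LinearMap.ker A.mulVecLin).subtype)
  omega

end Matrix

-- `MbEchelon` is the reduced row echelon form of `Mb`; its pivot columns 0–5, 8, 9, 10 are
-- picked out by `MbPivotSelect`, and the corresponding columns of `Mb` form `MbPivotCols`.
def MbPivotCols : Matrix (Fin 14) (Fin 9) ℚ := !![
  135/4, -18, -27/4, 0, 0, 0, 0, -1/2, -5/2;
  0, -12, 0, 0, -11/2, -1/3, 0, 2, 2;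
  -20, 0, -20, 2, -17, -9, -2, -2, 0;
  -60, 0, 12, -10, 9, 5, -6, 14/3, 16/3;
  15, 0, 3, 2/3, 71/12, 49/18, 0, 1/3, -1/3;
  5/4, 23/3, 0, 1, 7/8, 5/12, 0, 0, 0;
  -135/4, -45, 0, 2, 51/8, 55/4, 0, 0, 0;
  -15, 21, 0, -1/3, 233/12, 47/9, 0, 0, 0;
  -15, 10, 0, 2, 10, 19/3, 0, 0, 0;
  0, 0, 63/8, -7, -49/4, -28/3, -21/2, 0, 0;
  0, 0, -18, 1, 4, -1/6, 6, 0, 0;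
  0, 0, 0, 0, 0, 0, 70, 0, 0;
  0, 0, 0, 0, 0, 0, 0, -28, -28;
  0, 0, 0, 0, 0, 0, 0, -14/3, -28/3]

def MbEchelon : Matrix (Fin 9) (Fin 18) ℚ := !![
  1, 0, 0, 0, 0, 0, 0, 8/15, 0, 0, 0, -64/135, 44/189, 118/2835, -88/315, 1/45, 11/405, -8/315;
  0, 1, 0, 0, 0, 0, -3/7, 7/5, 0, 0, 0, -269/315, 1/441, -487/6615, 187/735, -37/240, -239/15120, -13/735;
  0, 0, 1, 0, 0, 0, 8/7, -16/15, 0, 0, 0, 752/945, -148/1323, 1516/19845, -236/2205, 1/45, -73/2835, 104/2205;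
  0, 0, 0, 1, 0, 0, 9/7, -21/5, 0, 0, 0, 479/105, -232/147, -353/2205, 618/245, -19/40, -1193/2520, 48/245;
  0, 0, 0, 0, 1, 0, 11/7, -52/15, 0, 0, 0, 2084/945, -1012/1323, 2452/19845, 1076/735, -47/180, -2029/11340, 12/245;
  0, 0, 0, 0, 0, 1, -3, 34/5, 0, 0, 0, -254/45, 142/63, -232/945, -146/35, 103/120, 563/1080, -6/35;
  0, 0, 0, 0, 0, 0, 0, 0, 1, 0, 0, 0, 0, 0, 0, 0, 0, -2/21;
  0, 0, 0, 0, 0, 0, 0, 0, 0, 1, 0, 8, -45/7, -9/7, 89/7, -57/16, -21/16, 3/7;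
  0, 0, 0, 0, 0, 0, 0, 0, 0, 0, 1, -4, 33/7, 8/7, -55/7, 33/16, 13/16, -3/7]

def MbPivotColsLeftInv : Matrix (Fin 9) (Fin 14) ℚ := !![
  -1898/212625, -12701/189000, 4099/108000, 10301/324000, 3259/18900, -661/15750, -299/20250, -421/6750, 0, -8/315, 0, 0, 0, 0;
  83/7938, -991/17640, 101/10080, 167/6048, 58/2205, 89/735, -19/1890, -13/315, 0, -13/735, 0, 0, 0, 0;
  -13816/297675, 5087/66150, -2683/37800, -6677/113400, -877/6615, -466/11025, 226/14175, 254/4725, 0, 104/2205, 0, 0, 0, 0;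
  -386/6615, 3469/5880, -563/3360, -2893/10080, -1807/2940, 19/98, 61/630, 89/210, 0, 48/245, 0, 0, 0, 0;
  -8434/297675, 5134/33075, -134/4725, -1081/14175, -101/1323, -2914/11025, 64/14175, 806/4725, 0, 12/245, 0, 0, 0, 0;
  481/14175, -6383/12600, 1177/7200, 5303/21600, 799/1260, 407/1050, -17/1350, -193/450, 0, -6/35, 0, 0, 0, 0;
  11/1575, -93/1400, -43/800, 43/2400, -23/140, -69/350, -7/150, -3/50, 0, -2/21, 0, 0, 0, 0;
  121/210, 851/560, -249/320, -157/320, -171/56, 243/140, 3/20, 21/20, 0, 3/7, 0, 0, 0, 0;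
  -41/70, -71/70, 63/80, 39/80, 87/28, -117/70, -1/5, -9/10, 0, -3/7, 0, 0, 0, 0]

def MbPivotSelect : Matrix (Fin 18) (Fin 9) ℚ := !![
  1, 0, 0, 0, 0, 0, 0, 0, 0;
  0, 1, 0, 0, 0, 0, 0, 0, 0;
  0, 0, 1, 0, 0, 0, 0, 0, 0;
  0, 0, 0, 1, 0, 0, 0, 0, 0;
  0, 0, 0, 0, 1, 0, 0, 0, 0;
  0, 0, 0, 0, 0, 1, 0, 0, 0;
  0, 0, 0, 0, 0, 0, 0, 0, 0;
  0, 0, 0, 0, 0, 0, 0, 0, 0;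
  0, 0, 0, 0, 0, 0, 1, 0, 0;
  0, 0, 0, 0, 0, 0, 0, 1, 0;
  0, 0, 0, 0, 0, 0, 0, 0, 1;
  0, 0, 0, 0, 0, 0, 0, 0, 0;
  0, 0, 0, 0, 0, 0, 0, 0, 0;
  0, 0, 0, 0, 0, 0, 0, 0, 0;
  0, 0, 0, 0, 0, 0, 0, 0, 0;
  0, 0, 0, 0, 0, 0, 0, 0, 0;
  0, 0, 0, 0, 0, 0, 0, 0, 0;
  0, 0, 0, 0, 0, 0, 0, 0, 0]

def NbRightInv : Matrix (Fin 14) (Fin 4) ℚ := !![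
  0, -1/7, -9/56, 1/42;
  -1/35, 0, 0, 0;
  -4/105, 8/21, 11/42, 1/63;
  4/35, -8/7, -11/14, 1/21;
  0, 0, 0, 0;
  0, 0, 0, 0;
  0, 0, 0, 0;
  0, 0, 0, 0;
  0, 0, 0, 0;
  0, 0, 0, 0;
  0, 0, 0, 0;
  0, 0, 0, 0;
  0, 0, 0, 0;
  0, 0, 0, 0]

theorem Nb_mul_Mb : Nb * Mb = 0 := by
  decide +kernel

theorem Mb_eq_MbPivotCols_mul_MbEchelon : Mb = MbPivotCols * MbEchelon := by
  decide +kernel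

theorem MbPivotColsLeftInv_mul_MbPivotCols : MbPivotColsLeftInv * MbPivotCols = 1 := by
  decide +kernel

theorem MbEchelon_mul_MbPivotSelect : MbEchelon * MbPivotSelect = 1 := by
  decide +kernel

theorem Nb_mul_NbRightInv : Nb * NbRightInv = 1 := by
  decide +kernel

theorem rank_Mb : Mb.rank = 9 :=
  Matrix.rank_eq_of_eq_mul_of_mul_eq_one MbPivotCols MbEchelon MbPivotColsLeftInv MbPivotSelect
    Mb_eq_MbPivotCols_mul_MbEchelon MbPivotColsLeftInv_mul_MbPivotCols MbEchelon_mul_MbPivotSelect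

theorem rank_Nb : Nb.rank = 4 :=
  Matrix.rank_eq_of_eq_mul_of_mul_eq_one 1 Nb 1 NbRightInv (Matrix.one_mul Nb).symm
    (Matrix.one_mul _) Nb_mul_NbRightInv

theorem stmt15 : Module.finrank ℚ Hb = 1 :=
  (Matrix.finrank_homology_eq Nb Mb Nb_mul_Mb).trans <| by
    rw [rank_Nb, rank_Mb, Fintype.card_fin]
end
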